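/- Let g : {0,1}^n → ℝ^n be monotone increasing and let u ∈ ℝ̄^n with minimal equilibrium y = E(u). For every coordinate k with y_k = 0, the shock satisfies u_k > g(y)_k. Moreover, replacing u_k by +∞ does not change the minimal equilibrium: E(u[k:=+∞]) = y. -/

import Mathlib

/-!
Since `g` is monotone, so is the best-response map `G_u`, and its iterates from `0` form an
increasing chain in `{0,1}^n`. Each strict step adds an active coordinate, so the chain is
stationary after `n` steps: `E(u)` is a fixed point of `G_u`, and `E(u)_k = 0` says exactly that
`g(E(u))_k < u_k`. Replacing `u_k` by `+∞` only forces the `k`-th output of `G` to `0`, and along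
the chain that coordinate is already `0`, because every iterate lies below `E(u)`.
-/

open Function Finset

/-- Best-response map: `G_u(y) i = 𝟙(g(y)_i ≥ u_i)`, comparisons in the extended reals. -/
noncomputable def Gmap {n : ℕ} (g : (Fin n → Bool) → Fin n → ℝ) (u : Fin n → EReal)
    (y : Fin n → Bool) : Fin n → Bool :=
  fun i => decide (u i ≤ ((g y i : ℝ) : EReal))

/-- Minimal equilibrium: `E(u) = (G_u)^[n](0)`. -/
noncomputable def Emin {n : ℕ} (g : (Fin n → Bool) → Fin n → ℝ) (u : Fin n → EReal) : Fin n → Bool :=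
  (Gmap g u)^[n] (fun _ => false)

section BoolVectors

variable {ι : Type*} [Fintype ι]

lemma card_filter_eq_true_lt {a b : ι → Bool} (hab : a < b) :
    #{i | a i = true} < #{i | b i = true} := by
  obtain ⟨hle, i, hi⟩ := Pi.lt_def.mp hab
  obtain ⟨hai, hbi⟩ := Bool.lt_iff.mp hi
  refine card_lt_card <| (ssubset_iff_of_subset fun j => ?_).mpr ⟨i, ?_, ?_⟩
  · simpa only [mem_filter_univ] using Bool.le_iff_imp.mp (hle j)
  · simpa only [mem_filter_univ]
  · simp only [mem_filter_univ, hai, Bool.false_eq_true, not_false_eq_true]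

theorem Monotone.isFixedPt_iterate_card {F : (ι → Bool) → ι → Bool} (hF : Monotone F) :
    IsFixedPt F (F^[Fintype.card ι] ⊥) := by
  set N := Fintype.card ι
  have hc : Monotone fun m => F^[m] ⊥ := hF.monotone_iterate_of_le_map bot_le
  by_contra hfix
  have hstep : ∀ m ≤ N, F^[m] ⊥ < F^[m + 1] ⊥ := by
    intro m hm
    refine (hc m.le_succ).lt_of_ne fun h => hfix ?_
    have hm_fix : IsFixedPt F (F^[m] ⊥) := by
      rw [IsFixedPt, ← iterate_succ_apply' F m]; exact h.symm
    rw [← Nat.sub_add_cancel hm, iterate_add_apply]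
    rwa [iterate_fixed hm_fix]
  have hgrow : ∀ m ≤ N + 1, m ≤ #{i | F^[m] ⊥ i = true} := by
    intro m
    induction m with
    | zero => simp
    | succ m ih =>
      intro hm
      have := card_filter_eq_true_lt (hstep m (by omega))
      have := ih (by omega)
      omega
  have := hgrow (N + 1) le_rfl
  have := card_filter_le (univ : Finset ι) fun i => F^[N + 1] ⊥ i = true
  simp only [card_univ] at this
  omega

end BoolVectors

section Equilibrium

variable {n : ℕ} {g : (Fin n → Bool) → Fin n → ℝ} {u : Fin n → EReal}

lemma monotone_gmap (hg : Monotone g) (u : Fin n → EReal) : Monotone (Gmap g u) := by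
  intro y z hyz i
  simp only [Gmap, Bool.le_iff_imp, decide_eq_true_eq]
  exact fun h => h.trans (EReal.coe_le_coe_iff.mpr (hg hyz i))

lemma gmap_emin (hg : Monotone g) : Gmap g u (Emin g u) = Emin g u := by
  have := (monotone_gmap hg u).isFixedPt_iterate_card
  rwa [Fintype.card_fin] at this

lemma coe_lt_of_emin_eq_false (hg : Monotone g) {k : Fin n} (hk : Emin g u k = false) :
    ((g (Emin g u) k : ℝ) : EReal) < u k := by
  rw [← gmap_emin hg, Gmap, decide_eq_false_iff_not, not_le] at hk
  exact hk

lemma gmap_update_top (g : (Fin n → Bool) → Fin n → ℝ) (u : Fin n → EReal) (k : Fin n)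
    (y : Fin n → Bool) : Gmap g (update u k ⊤) y = update (Gmap g u y) k false := by
  ext i
  rcases eq_or_ne i k with rfl | hik
  · simp [Gmap]
  · simp [Gmap, hik]

lemma emin_update_top (hg : Monotone g) {k : Fin n} (hk : Emin g u k = false) :
    Emin g (update u k ⊤) = Emin g u := by
  have hc : Monotone fun m => (Gmap g u)^[m] ⊥ :=
    (monotone_gmap hg u).monotone_iterate_of_le_map bot_le
  have hnk : (Gmap g u)^[n] ⊥ k = false := hk
  suffices ∀ m ≤ n, (Gmap g (update u k ⊤))^[m] ⊥ = (Gmap g u)^[m] ⊥ from this n le_rfl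
  intro m
  induction m with
  | zero => simp
  | succ m ih =>
    intro hm
    have hmk : (Gmap g u)^[m + 1] ⊥ k = false := le_bot_iff.mp (hnk ▸ hc hm k : _ ≤ false)
    rw [iterate_succ_apply', iterate_succ_apply', ih (by omega), gmap_update_top,
      update_eq_self_iff, ← iterate_succ_apply' (Gmap g u) m ⊥, hmk]

end Equilibrium

/-- If `y = E(u)` is the minimal equilibrium and `y_k = 0`, then `u_k > g(y)_k`, and
replacing `u_k` by `+∞` does not change the minimal equilibrium. -/
theorem shock_gt_of_no_action {n : ℕ} (g : (Fin n → Bool) → Fin n → ℝ)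
    (hg : Monotone g) (u : Fin n → EReal) (y : Fin n → Bool) (hy : Emin g u = y)
    (k : Fin n) (hk : y k = false) :
    ((g y k : ℝ) : EReal) < u k ∧ Emin g (Function.update u k ⊤) = y := by
  subst hy
  exact ⟨coe_lt_of_emin_eq_false hg hk, emin_update_top hg hk⟩
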